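/- For every x ∈ (−1,1), the Cauchy principal value (1/π)·lim_{ρ→0⁺} ∫_{{y ∈ (−1,1) : |y−x| > ρ}} 1/(√(1−y²)·(y−x)) dy equals 0, and for every integer n ≥ 1, the Cauchy principal value (1/π)·lim_{ρ→0⁺} ∫_{{y ∈ (−1,1) : |y−x| > ρ}} T_n(y)/(√(1−y²)·(y−x)) dy equals U_{n−1}(x). -/

import Mathlib

/-!
Write `T_n(y) = T_n(x) + (y - x) q_n(y)` with `q_n` the divided difference of `T_n` at `x`, a
polynomial. The principal value then splits as `T_n(x)` times the principal value for `n = 0`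
plus the ordinary integral `∫ q_n(y) / √(1 - y²) dy`.

For `n = 0` the integrand has an explicit primitive whose only singular part is `log |y - x|`;
it is symmetric about `x`, so it cancels between `x - ρ` and `x + ρ`, and the principal value
vanishes.

For the ordinary integral, the recurrence `T_{n+2} = 2X T_{n+1} - T_n` gives
`q_{n+2} = 2 T_{n+1} + 2x q_{n+1} - q_n`. Since `∫ T_m / √(1 - y²) = 0` for `m ≠ 0`, the
integrals `I_n = ∫ q_n / √(1 - y²)` satisfy the recurrence of `U_{n-1}(x)`. With `I_0 = 0` and
`I_1 = π`, this gives `I_n = π U_{n-1}(x)`.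
-/

open MeasureTheory Filter Set Polynomial Topology Polynomial.Chebyshev

section DividedDifference

variable {R : Type*} [CommRing R]

noncomputable def divDiff (p : R[X]) (x : R) : R[X] := (p - C (p.eval x)) /ₘ (X - C x)

theorem X_sub_C_mul_divDiff (p : R[X]) (x : R) :
    (X - C x) * divDiff p x = p - C (p.eval x) :=
  mul_divByMonic_eq_iff_isRoot.2 (by simp)

theorem eval_sub_eval_eq_mul_divDiff (p : R[X]) (x y : R) :
    p.eval y - p.eval x = (y - x) * (divDiff p x).eval y := by
  simpa using congrArg (eval y) (X_sub_C_mul_divDiff p x).symm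

variable [IsDomain R]

theorem divDiff_eq_of_X_sub_C_mul {p q : R[X]} {x : R}
    (h : (X - C x) * q = p - C (p.eval x)) : divDiff p x = q :=
  mul_left_cancel₀ (X_sub_C_ne_zero x) ((X_sub_C_mul_divDiff p x).trans h.symm)

@[simp]
theorem divDiff_one (x : R) : divDiff 1 x = 0 :=
  divDiff_eq_of_X_sub_C_mul (by simp)

@[simp]
theorem divDiff_X (x : R) : divDiff X x = 1 :=
  divDiff_eq_of_X_sub_C_mul (by simp)

theorem divDiff_chebyshevT_add_two (x : R) (n : ℤ) :
    divDiff (T R (n + 2)) x =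
      2 * T R (n + 1) + 2 * C x * divDiff (T R (n + 1)) x - divDiff (T R n) x := by
  refine divDiff_eq_of_X_sub_C_mul ?_
  have h₁ := X_sub_C_mul_divDiff (T R (n + 1)) x
  have h₀ := X_sub_C_mul_divDiff (T R n) x
  simp only [T_add_two, eval_sub, eval_mul, eval_X, eval_ofNat, map_sub, map_mul, map_ofNat]
  linear_combination 2 * C x * h₁ - h₀

end DividedDifference

theorem integral_Ioo_eq_sub_of_hasDerivAt {E : Type*} [NormedAddCommGroup E] [NormedSpace ℝ E]
    [CompleteSpace E] {f f' : ℝ → E} {a b : ℝ} (hab : a ≤ b)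
    (hcont : ContinuousOn f (Icc a b)) (hderiv : ∀ y ∈ Ioo a b, HasDerivAt f (f' y) y)
    (hint : IntegrableOn f' (Ioo a b)) :
    ∫ y in Ioo a b, f' y = f b - f a := by
  rw [← integral_Ioc_eq_integral_Ioo, ← intervalIntegral.integral_of_le hab]
  exact intervalIntegral.integral_eq_sub_of_hasDerivAt_of_le hab hcont hderiv
    ((intervalIntegrable_iff_integrableOn_Ioo_of_le hab).2 hint)

theorem one_sub_sq_pos {y : ℝ} (hy : y ∈ Ioo (-1 : ℝ) 1) : 0 < 1 - y ^ 2 := by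
  nlinarith [hy.1, hy.2]

theorem hasDerivAt_sqrt_one_sub_sq {y : ℝ} (hy : y ∈ Ioo (-1 : ℝ) 1) :
    HasDerivAt (fun y : ℝ => √(1 - y ^ 2)) (-y / √(1 - y ^ 2)) y := by
  have h := ((hasDerivAt_pow 2 y).const_sub 1).sqrt (one_sub_sq_pos hy).ne'
  convert h using 1
  have : √(1 - y ^ 2) ≠ 0 := (Real.sqrt_pos.2 (one_sub_sq_pos hy)).ne'
  field_simp
  ring

theorem integrableOn_one_div_sqrt_one_sub_sq :
    IntegrableOn (fun y : ℝ => 1 / √(1 - y ^ 2)) (Ioo (-1) 1) :=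
  (intervalIntegral.integrableOn_deriv_of_nonneg Real.continuous_arcsin.continuousOn
    (fun y hy => Real.hasDerivAt_arcsin hy.1.ne' hy.2.ne) (fun y _ => by positivity)).mono_set
    Ioo_subset_Ioc_self

theorem integral_one_div_sqrt_one_sub_sq : ∫ y in Ioo (-1 : ℝ) 1, 1 / √(1 - y ^ 2) = Real.pi := by
  rw [integral_Ioo_eq_sub_of_hasDerivAt (by norm_num) Real.continuous_arcsin.continuousOn
    (fun y hy => Real.hasDerivAt_arcsin hy.1.ne' hy.2.ne) integrableOn_one_div_sqrt_one_sub_sq,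
    Real.arcsin_one, Real.arcsin_neg_one]
  ring

theorem integrableOn_eval_div_sqrt_one_sub_sq (p : ℝ[X]) :
    IntegrableOn (fun y : ℝ => p.eval y / √(1 - y ^ 2)) (Ioo (-1) 1) := by
  obtain ⟨M, hM⟩ := isCompact_Icc.exists_bound_of_continuousOn
    (p.continuous (R := ℝ)).continuousOn (s := Icc (-1 : ℝ) 1)
  refine (integrableOn_one_div_sqrt_one_sub_sq.const_mul M).mono'
    (p.continuous.measurable.div (by fun_prop)).aestronglyMeasurable ?_
  refine (ae_restrict_iff' measurableSet_Ioo).2 (ae_of_all _ fun y hy => ?_)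
  rw [norm_div, Real.norm_of_nonneg (Real.sqrt_nonneg _), ← mul_one_div]
  exact mul_le_mul_of_nonneg_right (hM y (Ioo_subset_Icc_self hy)) (by positivity)

theorem integral_chebyshevT_div_sqrt_one_sub_sq {n : ℤ} (hn : n ≠ 0) :
    ∫ y in Ioo (-1 : ℝ) 1, (T ℝ n).eval y / √(1 - y ^ 2) = 0 := by
  -- `n T_n = X U_{n-1} - (1 - X²) U'_{n-1}` makes `-√(1 - y²) U_{n-1}(y) / n` a primitive
  have hn' : (n : ℝ) ≠ 0 := by exact_mod_cast hn
  have key := fun y : ℝ => congrArg (eval y) (add_one_mul_T_eq_poly_in_U (R := ℝ) (n - 1))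
  simp only [sub_add_cancel, eval_mul, eval_sub, eval_one, eval_X, eval_pow,
    eval_intCast, Int.cast_sub, Int.cast_one] at key
  rw [integral_Ioo_eq_sub_of_hasDerivAt (f := fun y => -(√(1 - y ^ 2) * (U ℝ (n - 1)).eval y) / n)
    (by norm_num) (by fun_prop) (fun y hy => ?_) (integrableOn_eval_div_sqrt_one_sub_sq _)]
  · norm_num
  · have hw : 0 < √(1 - y ^ 2) := Real.sqrt_pos.2 (one_sub_sq_pos hy)
    refine (((hasDerivAt_sqrt_one_sub_sq hy).fun_mul
      ((U ℝ (n - 1)).hasDerivAt y)).fun_neg.div_const (n : ℝ)).congr_deriv ?_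
    field_simp
    linear_combination
      -key y - (derivative (U ℝ (n - 1))).eval y * Real.sq_sqrt (one_sub_sq_pos hy).le

theorem integral_divDiff_chebyshevT_div_sqrt_one_sub_sq (x : ℝ) (n : ℕ) :
    ∫ y in Ioo (-1 : ℝ) 1, (divDiff (T ℝ n) x).eval y / √(1 - y ^ 2) =
      Real.pi * (U ℝ (n - 1)).eval x := by
  induction n using Nat.twoStepInduction with
  | zero => simp
  | one => simpa using integral_one_div_sqrt_one_sub_sq
  | more n ih₀ ih₁ =>
    have hq := fun m : ℤ => integrableOn_eval_div_sqrt_one_sub_sq (divDiff (T ℝ m) x)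
    have hT := integral_chebyshevT_div_sqrt_one_sub_sq (n := n + 1) (by omega)
    push_cast at ih₁ hT ⊢
    have hU := congrArg (eval x) (U_add_two ℝ ((n : ℤ) - 1))
    simp only [eval_sub, eval_mul, eval_X, eval_ofNat] at hU
    rw [divDiff_chebyshevT_add_two]
    simp only [eval_sub, eval_add, eval_mul, eval_ofNat, eval_C, sub_div, add_div, mul_div_assoc]
    have hTn := (integrableOn_eval_div_sqrt_one_sub_sq (T ℝ (n + 1))).const_mul 2
    have hqn := (hq (n + 1)).const_mul (2 * x)
    rw [integral_sub ?_ (hq _), integral_add hTn hqn, integral_const_mul, integral_const_mul, hT,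
      ih₀, ih₁]
    · rw [show (n : ℤ) - 1 + 2 = n + 2 - 1 by ring, show (n : ℤ) - 1 + 1 = n + 1 - 1 by ring] at hU
      linear_combination -Real.pi * hU
    · exact hTn.add hqn

theorem measurableSet_lt_abs_sub (ρ x : ℝ) : MeasurableSet {y : ℝ | ρ < |y - x|} :=
  measurableSet_lt measurable_const (by fun_prop)

theorem tendsto_setIntegral_mem_and_lt_abs_sub {E : Type*} [NormedAddCommGroup E]
    [NormedSpace ℝ E] {μ : Measure ℝ} [NullSingletonClass μ] {s : Set ℝ} {g : ℝ → E}
    (hs : MeasurableSet s) (hg : IntegrableOn g s μ) (x : ℝ) :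
    Tendsto (fun ρ => ∫ y in {y | y ∈ s ∧ ρ < |y - x|}, g y ∂μ) (𝓝 0) (𝓝 (∫ y in s, g y ∂μ)) := by
  have hdom : Tendsto (fun ρ => ∫ y, {y | ρ < |y - x|}.indicator g y ∂μ.restrict s) (𝓝 0)
      (𝓝 (∫ y in s, g y ∂μ)) := by
    refine tendsto_integral_filter_of_dominated_convergence (fun y => ‖g y‖)
      (.of_forall fun ρ => hg.aestronglyMeasurable.indicator (measurableSet_lt_abs_sub ρ x))
      (.of_forall fun ρ => ae_of_all _ fun y => norm_indicator_le_norm_self _ _) hg.norm ?_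
    filter_upwards [Measure.ae_ne _ x] with y hy
    refine tendsto_const_nhds.congr' ?_
    filter_upwards [Iio_mem_nhds (abs_pos.2 (sub_ne_zero.2 hy))] with ρ hρ
    exact (indicator_of_mem (show y ∈ {y : ℝ | ρ < |y - x|} from hρ) g).symm
  refine hdom.congr fun ρ => ?_
  rw [integral_indicator (measurableSet_lt_abs_sub ρ x), Measure.restrict_restrict' hs, inter_comm]
  rfl

theorem integrableOn_one_div_sqrt_mul_sub {x ρ : ℝ} (hρ : 0 < ρ) :
    IntegrableOn (fun y : ℝ => 1 / (√(1 - y ^ 2) * (y - x)))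
      {y | y ∈ Ioo (-1 : ℝ) 1 ∧ ρ < |y - x|} := by
  refine ((integrableOn_one_div_sqrt_one_sub_sq.mono_set fun y hy => hy.1).const_mul (1 / ρ)).mono'
    (by fun_prop : Measurable fun y : ℝ => 1 / (√(1 - y ^ 2) * (y - x))).aestronglyMeasurable ?_
  refine (ae_restrict_iff' ?_).2 (ae_of_all _ fun y hy => ?_)
  · exact measurableSet_Ioo.inter (measurableSet_lt_abs_sub ρ x)
  have hw : 0 < √(1 - y ^ 2) := Real.sqrt_pos.2 (one_sub_sq_pos hy.1)
  rw [norm_div, norm_one, norm_mul, Real.norm_of_nonneg hw.le, Real.norm_eq_abs,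
    one_div_mul_one_div, mul_comm ρ]
  gcongr
  exact hy.2.le

theorem one_sub_mul_add_sqrt_mul_sqrt_pos {x y : ℝ} (hx : x ∈ Ioo (-1 : ℝ) 1)
    (hy : y ∈ Icc (-1 : ℝ) 1) : 0 < 1 - x * y + √(1 - x ^ 2) * √(1 - y ^ 2) := by
  have : 0 < 1 - x * y := by
    nlinarith [sq_nonneg (x - y), mul_pos (sub_pos.2 hx.2) (neg_lt_iff_pos_add.1 hx.1),
      mul_nonneg (sub_nonneg.2 hy.2) (neg_le_iff_add_nonneg.1 hy.1)]
  positivity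

-- With `x = cos φ`, `y = cos θ` this is `log |sin ((θ - φ) / 2) / sin ((θ + φ) / 2)| / sin φ`;
-- `Real.log (y - x)` is `log |y - x|` also for `y < x`.
noncomputable def cauchyPrimitive (x y : ℝ) : ℝ :=
  (Real.log (y - x) - Real.log (1 - x * y + √(1 - x ^ 2) * √(1 - y ^ 2))) / √(1 - x ^ 2)

theorem hasDerivAt_cauchyPrimitive {x y : ℝ} (hx : x ∈ Ioo (-1 : ℝ) 1) (hy : y ∈ Ioo (-1 : ℝ) 1)
    (hxy : y ≠ x) :
    HasDerivAt (cauchyPrimitive x) (1 / (√(1 - y ^ 2) * (y - x))) y := by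
  have hs : 0 < √(1 - x ^ 2) := Real.sqrt_pos.2 (one_sub_sq_pos hx)
  have hw : 0 < √(1 - y ^ 2) := Real.sqrt_pos.2 (one_sub_sq_pos hy)
  have hg := one_sub_mul_add_sqrt_mul_sqrt_pos hx (Ioo_subset_Icc_self hy)
  have hsub : y - x ≠ 0 := sub_ne_zero.2 hxy
  have hlog : HasDerivAt (fun y => Real.log (y - x)) (1 / (y - x)) y := by
    simpa using ((hasDerivAt_id y).sub_const x).log hsub
  have hden : HasDerivAt (fun y => 1 - x * y + √(1 - x ^ 2) * √(1 - y ^ 2))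
      (-x + √(1 - x ^ 2) * (-y / √(1 - y ^ 2))) y := by
    simpa using (((hasDerivAt_id y).const_mul x).const_sub 1).fun_add
      ((hasDerivAt_sqrt_one_sub_sq hy).const_mul √(1 - x ^ 2))
  have hd := (hlog.fun_sub (hden.log hg.ne')).div_const √(1 - x ^ 2)
  refine hd.congr_deriv ?_
  have hs2 := Real.sq_sqrt (one_sub_sq_pos hx).le
  have hw2 := Real.sq_sqrt (one_sub_sq_pos hy).le
  generalize hG : 1 - x * y + √(1 - x ^ 2) * √(1 - y ^ 2) = G at hg
  field_simp
  linear_combination (√(1 - x ^ 2) - √(1 - y ^ 2)) * hG - √(1 - y ^ 2) * hs2 + √(1 - x ^ 2) * hw2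

theorem continuousOn_cauchyPrimitive {x : ℝ} (hx : x ∈ Ioo (-1 : ℝ) 1) :
    ContinuousOn (cauchyPrimitive x) (Icc (-1) 1 \ {x}) := by
  refine (ContinuousOn.sub ?_ ?_).div_const _
  · exact ContinuousOn.log (by fun_prop) fun _ hy => sub_ne_zero.2 hy.2
  · exact ContinuousOn.log (by fun_prop) fun _ hy =>
      (one_sub_mul_add_sqrt_mul_sqrt_pos hx hy.1).ne'

theorem cauchyPrimitive_one (x : ℝ) : cauchyPrimitive x 1 = 0 := by
  simp [cauchyPrimitive]

theorem cauchyPrimitive_neg_one (x : ℝ) : cauchyPrimitive x (-1) = 0 := by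
  simp [cauchyPrimitive, ← Real.log_neg_eq_log (-1 - x), add_comm]

theorem integral_Ioo_one_div_sqrt_mul_sub {x a b : ℝ} (hx : x ∈ Ioo (-1 : ℝ) 1) (hab : a ≤ b)
    (ha : -1 ≤ a) (hb : b ≤ 1) (hxab : x ∉ Icc a b)
    (hint : IntegrableOn (fun y : ℝ => 1 / (√(1 - y ^ 2) * (y - x))) (Ioo a b)) :
    ∫ y in Ioo a b, 1 / (√(1 - y ^ 2) * (y - x)) = cauchyPrimitive x b - cauchyPrimitive x a :=
  integral_Ioo_eq_sub_of_hasDerivAt hab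
    ((continuousOn_cauchyPrimitive hx).mono fun _ hy =>
      ⟨⟨ha.trans hy.1, hy.2.trans hb⟩, fun h => hxab (h ▸ hy)⟩)
    (fun _ hy => hasDerivAt_cauchyPrimitive hx ⟨ha.trans_lt hy.1, hy.2.trans_le hb⟩
      fun h => hxab (h ▸ Ioo_subset_Icc_self hy))
    hint

theorem setIntegral_one_div_sqrt_mul_sub {x ρ : ℝ} (hx : x ∈ Ioo (-1 : ℝ) 1) (hρ : 0 < ρ)
    (h₁ : -1 ≤ x - ρ) (h₂ : x + ρ ≤ 1) :
    ∫ y in {y | y ∈ Ioo (-1 : ℝ) 1 ∧ ρ < |y - x|}, 1 / (√(1 - y ^ 2) * (y - x)) =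
      cauchyPrimitive x (x - ρ) - cauchyPrimitive x (x + ρ) := by
  have hE : {y | y ∈ Ioo (-1 : ℝ) 1 ∧ ρ < |y - x|} = Ioo (-1) (x - ρ) ∪ Ioo (x + ρ) 1 := by
    ext y
    simp only [mem_ofPred_eq, mem_Ioo, mem_union, lt_abs]
    grind
  have hint := integrableOn_one_div_sqrt_mul_sub (x := x) hρ
  rw [hE] at hint ⊢
  have hdisj : Disjoint (Ioo (-1) (x - ρ)) (Ioo (x + ρ) 1) :=
    disjoint_left.2 fun y hy hy' => by linarith [hy.2, hy'.1]
  rw [setIntegral_union hdisj measurableSet_Ioo (hint.mono_set subset_union_left)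
      (hint.mono_set subset_union_right),
    integral_Ioo_one_div_sqrt_mul_sub hx h₁ le_rfl (by linarith) (fun h => by linarith [h.2])
      (hint.mono_set subset_union_left),
    integral_Ioo_one_div_sqrt_mul_sub hx h₂ (by linarith) le_rfl (fun h => by linarith [h.1])
      (hint.mono_set subset_union_right),
    cauchyPrimitive_one, cauchyPrimitive_neg_one]
  ring

theorem tendsto_pv_one_div_sqrt_mul_sub {x : ℝ} (hx : x ∈ Ioo (-1 : ℝ) 1) :
    Tendsto (fun ρ => ∫ y in {y | y ∈ Ioo (-1 : ℝ) 1 ∧ ρ < |y - x|}, 1 / (√(1 - y ^ 2) * (y - x)))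
      (𝓝[>] 0) (𝓝 0) := by
  set G : ℝ → ℝ := fun y => 1 - x * y + √(1 - x ^ 2) * √(1 - y ^ 2)
  have hlogG : ContinuousAt (fun y => Real.log (G y)) x :=
    (by fun_prop : Continuous G).continuousAt.log
      (one_sub_mul_add_sqrt_mul_sqrt_pos hx (Ioo_subset_Icc_self hx)).ne'
  have hlim : Tendsto (fun ρ => (Real.log (G (x + ρ)) - Real.log (G (x - ρ))) / √(1 - x ^ 2))
      (𝓝 0) (𝓝 0) := by
    have h := ((hlogG.comp_of_eq (by fun_prop) (add_zero x)).sub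
      (hlogG.comp_of_eq (by fun_prop) (sub_zero x))).div_const √(1 - x ^ 2)
    simpa using h.tendsto
  refine (hlim.mono_left nhdsWithin_le_nhds).congr' ?_
  filter_upwards [Ioo_mem_nhdsGT (lt_min (sub_pos.2 hx.2) (neg_lt_iff_pos_add'.1 hx.1))]
    with ρ ⟨hρ, hρx⟩
  rw [setIntegral_one_div_sqrt_mul_sub hx hρ (by linarith [min_le_right (1 - x) (1 + x)])
    (by linarith [min_le_left (1 - x) (1 + x)])]
  simp only [cauchyPrimitive, G, sub_sub_cancel_left, add_sub_cancel_left, Real.log_neg_eq_log]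
  ring

theorem tendsto_pv_eval_div_sqrt_mul_sub {x : ℝ} (hx : x ∈ Ioo (-1 : ℝ) 1) (p : ℝ[X]) :
    Tendsto (fun ρ => ∫ y in {y | y ∈ Ioo (-1 : ℝ) 1 ∧ ρ < |y - x|},
        p.eval y / (√(1 - y ^ 2) * (y - x)))
      (𝓝[>] 0) (𝓝 (∫ y in Ioo (-1 : ℝ) 1, (divDiff p x).eval y / √(1 - y ^ 2))) := by
  have hq := integrableOn_eval_div_sqrt_one_sub_sq (divDiff p x)
  have h := ((tendsto_pv_one_div_sqrt_mul_sub hx).const_mul (p.eval x)).add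
    ((tendsto_setIntegral_mem_and_lt_abs_sub measurableSet_Ioo hq x).mono_left nhdsWithin_le_nhds)
  rw [mul_zero, zero_add] at h
  refine h.congr' ?_
  filter_upwards [self_mem_nhdsWithin] with ρ (hρ : 0 < ρ)
  rw [← integral_const_mul, ← integral_add ((integrableOn_one_div_sqrt_mul_sub hρ).const_mul _)
    (hq.mono_set fun y hy => hy.1)]
  refine setIntegral_congr_fun (measurableSet_Ioo.inter (measurableSet_lt_abs_sub ρ x))
    fun y hy => ?_
  have hw : √(1 - y ^ 2) ≠ 0 := (Real.sqrt_pos.2 (one_sub_sq_pos hy.1)).ne'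
  have hyx : y - x ≠ 0 := abs_pos.1 (hρ.trans hy.2)
  rw [← sub_add_cancel (p.eval y) (p.eval x), eval_sub_eval_eq_mul_divDiff]
  field_simp
  ring

theorem hilbert_transform_weighted_chebyshevT (x : ℝ) (hx : x ∈ Set.Ioo (-1 : ℝ) 1) :
    Tendsto (fun ρ : ℝ =>
        (1 / Real.pi) * ∫ y in {y : ℝ | y ∈ Set.Ioo (-1 : ℝ) 1 ∧ ρ < |y - x|},
          1 / (Real.sqrt (1 - y ^ 2) * (y - x)))
      (nhdsWithin 0 (Set.Ioi 0)) (nhds 0) ∧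
    ∀ n : ℕ, 1 ≤ n →
      Tendsto (fun ρ : ℝ =>
          (1 / Real.pi) * ∫ y in {y : ℝ | y ∈ Set.Ioo (-1 : ℝ) 1 ∧ ρ < |y - x|},
            (Polynomial.Chebyshev.T ℝ n).eval y / (Real.sqrt (1 - y ^ 2) * (y - x)))
        (nhdsWithin 0 (Set.Ioi 0))
        (nhds ((Polynomial.Chebyshev.U ℝ (n - 1)).eval x)) := by
  refine ⟨?_, fun n _ => ?_⟩
  · simpa only [mul_zero] using (tendsto_pv_one_div_sqrt_mul_sub hx).const_mul (1 / Real.pi)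
  · have h := (tendsto_pv_eval_div_sqrt_mul_sub hx (T ℝ n)).const_mul (1 / Real.pi)
    rwa [integral_divDiff_chebyshevT_div_sqrt_one_sub_sq, ← mul_assoc,
      one_div_mul_cancel Real.pi_ne_zero, one_mul] at h
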